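/- Let R be a commutative ring and L a flat R-module whose second exterior power vanishes: Λ²_R L = 0. Then for every integer p > 0: (a) every permutation σ in the symmetric group S_p acts as the identity on the p-fold tensor power L^{⊗p} = L ⊗_R ⋯ ⊗_R L (so that, in particular, the divided power module Γ^p(L) is canonically isomorphic to L^{⊗p}); (b) for every R-module N, the reordering isomorphism L^{⊗p} ⊗_R N^{⊗p} ≅ (L ⊗_R N)^{⊗p} followed by the canonical projection (L ⊗_R N)^{⊗p} → Sym^p_R(L ⊗_R N) descends to an isomorphism L^{⊗p} ⊗_R Sym^p_R(N) ≅ Sym^p_R(L ⊗_R N); (c) likewise it descends to an isomorphism L^{⊗p} ⊗_R Λ^p_R(N) ≅ Λ^p_R(L ⊗_R N). -/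

import Mathlib

/-!
Since `⋀² L = 0`, every alternating bilinear map on `L` vanishes; applied to two slots of
`L^{⊗p}`, this makes every transposition, hence every permutation, act trivially on `L^{⊗p}`.
Therefore the distributivity isomorphism `L^{⊗p} ⊗ N^{⊗p} ≅ (L ⊗ N)^{⊗p}` intertwines `id ⊗ σ`
with `σ`, and it matches the kernels of `L^{⊗p} ⊗ N^{⊗p} → L^{⊗p} ⊗ Q(N)` and
`(L ⊗ N)^{⊗p} → Q(L ⊗ N)` for `Q = Sym^p` and `Q = Λ^p`.

For `Λ^p` one needs that `(L ⊗ N)^{⊗p} → L^{⊗p} ⊗ Λ^p N` kills tensors with two equal factors.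
The sign rule gives this only when `2` is invertible; in general, polarizing in the two equal
slots reduces it to factors that are pure tensors `l ⊗ m`, where it is clear. Conversely,
`⋀² L = 0` kills `⋯ ∧ (l ⊗ m) ∧ ⋯ ∧ (l' ⊗ m) ∧ ⋯`, which is alternating in `(l, l')`.
-/

open scoped TensorProduct

/-- The submodule of the `p`-th tensor power of `M` spanned by the differences
`t - σ·t` for permutations `σ ∈ S_p`; the quotient by it is the `p`-th symmetric power
`Sym^p_R(M)`. -/
def symRelations (R : Type*) [CommRing R] (M : Type*) [AddCommGroup M] [Module R M]
    (p : ℕ) : Submodule R (⨂[R]^p M) :=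
  Submodule.span R
    {x | ∃ (σ : Equiv.Perm (Fin p)) (t : ⨂[R]^p M),
      x = t - PiTensorProduct.reindex R (fun _ => M) σ t}

/-- The canonical projection from the `p`-th tensor power onto the `p`-th exterior
power. -/
noncomputable def tensorPowerToExteriorPower (R : Type*) [CommRing R]
    (M : Type*) [AddCommGroup M] [Module R M] (p : ℕ) :
    (⨂[R]^p M) →ₗ[R] ⋀[R]^p M :=
  LinearMap.codRestrict (⋀[R]^p M)
    (PiTensorProduct.lift (ExteriorAlgebra.ιMulti R p).toMultilinearMap)
    (by
      intro x
      induction x using PiTensorProduct.induction_on with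
      | smul_tprod r f =>
          rw [map_smul]
          refine Submodule.smul_mem _ _ ?_
          simpa [PiTensorProduct.lift.tprod] using
            ExteriorAlgebra.ιMulti_range R p ⟨f, rfl⟩
      | add a b ha hb =>
          rw [map_add]; exact Submodule.add_mem _ ha hb)

open PiTensorProduct Function

section ExteriorSquare

variable {R : Type*} [CommRing R] {L : Type*} [AddCommGroup L] [Module R L]

def MultilinearMap.bilinAt {ι M T : Type*} [DecidableEq ι] [AddCommGroup M] [Module R M]
    [AddCommGroup T] [Module R T] (f : MultilinearMap R (fun _ : ι => M) T) (v : ι → M)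
    {i j : ι} (hij : i ≠ j) : M →ₗ[R] M →ₗ[R] T :=
  LinearMap.mk₂ R (fun x y => f (update (update v i x) j y))
    (fun x x' y => by simp only [update_comm hij, f.map_update_add])
    (fun c x y => by simp only [update_comm hij, f.map_update_smul])
    (fun x y y' => f.map_update_add _ _ _ _)
    (fun c x y => f.map_update_smul _ _ _ _)

@[simp]
theorem MultilinearMap.bilinAt_apply {ι M T : Type*} [DecidableEq ι] [AddCommGroup M]
    [Module R M] [AddCommGroup T] [Module R T] (f : MultilinearMap R (fun _ : ι => M) T)
    (v : ι → M) {i j : ι} (hij : i ≠ j) (x y : M) :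
    f.bilinAt v hij x y = f (update (update v i x) j y) := rfl

theorem LinearMap.eq_zero_of_apply_self_of_exteriorPower_two_eq_bot
    (hΛ : (⋀[R]^2 L : Submodule R (ExteriorAlgebra R L)) = ⊥)
    {T : Type*} [AddCommGroup T] [Module R T] (B : L →ₗ[R] L →ₗ[R] T)
    (hB : ∀ x, B x x = 0) : B = 0 := by
  let A : L [⋀^Fin 2]→ₗ[R] T :=
    { toMultilinearMap :=
        LinearMap.uncurryLeft ((MultilinearMap.ofSubsingletonₗ R R L T 0).toLinearMap ∘ₗ B)
      map_eq_zero_of_eq' := fun v i j hv hij => by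
        fin_cases i <;> fin_cases j <;> simp_all [Fin.tail] }
  ext a b
  have hA : A ![a, b] = B a b := rfl
  have hab : exteriorPower.ιMulti R 2 ![a, b] = 0 := by
    ext1
    exact (Submodule.eq_bot_iff _).1 hΛ _ (exteriorPower.ιMulti R 2 ![a, b]).2
  rw [← hA, ← exteriorPower.alternatingMapLinearEquiv_apply_ιMulti, hab, map_zero]
  rfl

end ExteriorSquare

section Permutations

variable {R : Type*} [CommRing R] {L : Type*} [AddCommGroup L] [Module R L]

theorem LinearMap.flip_eq_self_of_exteriorPower_two_eq_bot
    (hΛ : (⋀[R]^2 L : Submodule R (ExteriorAlgebra R L)) = ⊥) {T : Type*} [AddCommGroup T]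
    [Module R T] (B : L →ₗ[R] L →ₗ[R] T) : B.flip = B :=
  sub_eq_zero.1 <| (B.flip - B).eq_zero_of_apply_self_of_exteriorPower_two_eq_bot hΛ (by simp)

theorem reindex_swap_eq_self (hΛ : (⋀[R]^2 L : Submodule R (ExteriorAlgebra R L)) = ⊥)
    {ι : Type*} [DecidableEq ι] (i j : ι) (x : ⨂[R] _ : ι, L) :
    reindex R (fun _ => L) (Equiv.swap i j) x = x := by
  rcases eq_or_ne i j with rfl | hij
  · rw [Equiv.swap_self, reindex_refl, LinearEquiv.refl_apply]
  suffices (reindex R (fun _ => L) (Equiv.swap i j)).toLinearMap = LinearMap.id from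
    LinearMap.congr_fun this x
  ext f
  have hsymm := LinearMap.congr_fun₂ (((PiTensorProduct.tprod R).bilinAt f
    hij.symm).flip_eq_self_of_exteriorPower_two_eq_bot hΛ) (f j) (f i)
  rw [LinearMap.flip_apply, MultilinearMap.bilinAt_apply, MultilinearMap.bilinAt_apply,
    update_eq_self, update_eq_self, ← Equiv.comp_swap_eq_update] at hsymm
  rw [LinearMap.compMultilinearMap_apply, LinearEquiv.coe_coe, reindex_tprod, Equiv.symm_swap]
  exact hsymm

theorem reindex_perm_eq_self (hΛ : (⋀[R]^2 L : Submodule R (ExteriorAlgebra R L)) = ⊥)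
    {ι : Type*} [DecidableEq ι] [Finite ι] (σ : Equiv.Perm ι) (x : ⨂[R] _ : ι, L) :
    reindex R (fun _ => L) σ x = x := by
  induction σ using Equiv.Perm.swap_induction_on generalizing x with
  | one => rw [Equiv.Perm.one_def, reindex_refl, LinearEquiv.refl_apply]
  | swap_mul τ i j _ ih =>
    rw [Equiv.Perm.mul_def, ← reindex_reindex, ih, reindex_swap_eq_self hΛ]

end Permutations

section TensorPowerTensorEquiv

variable (R : Type*) [CommRing R]

noncomputable def tensorPowerSuccEquiv (M : Type*) [AddCommGroup M] [Module R M] (p : ℕ) :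
    (⨂[R]^p M) ⊗[R] M ≃ₗ[R] ⨂[R]^(p + 1) M :=
  (TensorProduct.congr (LinearEquiv.refl R _) (subsingletonEquiv 0).symm).trans
    TensorPower.mulEquiv

variable {R}

theorem tensorPowerSuccEquiv_tprod_tmul {M : Type*} [AddCommGroup M] [Module R M] {p : ℕ}
    (g : Fin p → M) (m : M) :
    tensorPowerSuccEquiv R M p (PiTensorProduct.tprod R g ⊗ₜ m) =
      PiTensorProduct.tprod R (Fin.snoc g m) := by
  rw [tensorPowerSuccEquiv, LinearEquiv.trans_apply, TensorProduct.congr_tmul,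
    LinearEquiv.refl_apply, subsingletonEquiv_symm_apply', ← TensorPower.gMul_def,
    TensorPower.tprod_mul_tprod, Fin.append_right_eq_snoc]

theorem tensorPowerSuccEquiv_symm_tprod {M : Type*} [AddCommGroup M] [Module R M] {p : ℕ}
    (v : Fin (p + 1) → M) :
    (tensorPowerSuccEquiv R M p).symm (PiTensorProduct.tprod R v) =
      PiTensorProduct.tprod R (Fin.init v) ⊗ₜ v (Fin.last p) := by
  rw [LinearEquiv.symm_apply_eq, tensorPowerSuccEquiv_tprod_tmul, Fin.snoc_init_self]

variable (R) (L N : Type*) [AddCommGroup L] [Module R L] [AddCommGroup N] [Module R N]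

noncomputable def tensorPowerTensorEquiv :
    ∀ p : ℕ, (⨂[R]^p L) ⊗[R] (⨂[R]^p N) ≃ₗ[R] ⨂[R]^p (L ⊗[R] N)
  | 0 => (TensorProduct.congr (isEmptyEquiv (Fin 0)) (isEmptyEquiv (Fin 0))).trans <|
      (TensorProduct.lid R R).trans (isEmptyEquiv (Fin 0)).symm
  | p + 1 =>
      (TensorProduct.congr (tensorPowerSuccEquiv R L p).symm
        (tensorPowerSuccEquiv R N p).symm).trans <|
      (TensorProduct.tensorTensorTensorComm R _ L _ N).trans <|
      (TensorProduct.congr (tensorPowerTensorEquiv p) (LinearEquiv.refl R _)).trans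
        (tensorPowerSuccEquiv R (L ⊗[R] N) p)

variable {R L N}

theorem tensorPowerTensorEquiv_tprod_tmul_tprod {p : ℕ} (f : Fin p → L) (n : Fin p → N) :
    tensorPowerTensorEquiv R L N p (PiTensorProduct.tprod R f ⊗ₜ PiTensorProduct.tprod R n) =
      PiTensorProduct.tprod R (fun i => f i ⊗ₜ n i) := by
  induction p with
  | zero =>
    simp only [tensorPowerTensorEquiv, LinearEquiv.trans_apply, TensorProduct.congr_tmul,
      isEmptyEquiv_apply_tprod, TensorProduct.lid_tmul, one_smul, LinearEquiv.symm_apply_eq]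
  | succ p ih =>
    simp only [tensorPowerTensorEquiv, LinearEquiv.trans_apply, TensorProduct.congr_tmul,
      tensorPowerSuccEquiv_symm_tprod, TensorProduct.tensorTensorTensorComm_tmul, ih,
      LinearEquiv.refl_apply, tensorPowerSuccEquiv_tprod_tmul]
    congr 1
    ext i
    induction i using Fin.lastCases <;> simp [Fin.init]

end TensorPowerTensorEquiv

section TensorPowerTensorLemmas

variable {R : Type*} [CommRing R] {L N : Type*} [AddCommGroup L] [Module R L]
  [AddCommGroup N] [Module R N] {p : ℕ}

theorem map₂_mk_eq_tensorPowerTensorEquiv (x : ⨂[R]^p L) (t : ⨂[R]^p N) :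
    map₂ (fun _ => TensorProduct.mk R L N) x t = tensorPowerTensorEquiv R L N p (x ⊗ₜ t) := by
  suffices map₂ (fun _ => TensorProduct.mk R L N) =
      (TensorProduct.mk R _ _).compr₂ (tensorPowerTensorEquiv R L N p).toLinearMap from
    LinearMap.congr_fun₂ this x t
  ext f n
  simp [map₂_tprod_tprod, tensorPowerTensorEquiv_tprod_tmul_tprod]

theorem tensorPowerTensorEquiv_symm_tprod (f : Fin p → L) (n : Fin p → N) :
    (tensorPowerTensorEquiv R L N p).symm (PiTensorProduct.tprod R fun k => f k ⊗ₜ n k) =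
      PiTensorProduct.tprod R f ⊗ₜ PiTensorProduct.tprod R n := by
  rw [LinearEquiv.symm_apply_eq, tensorPowerTensorEquiv_tprod_tmul_tprod]

theorem tensorPowerTensorEquiv_map_reindex (σ : Equiv.Perm (Fin p))
    (w : (⨂[R]^p L) ⊗[R] (⨂[R]^p N)) :
    tensorPowerTensorEquiv R L N p
        (TensorProduct.map (reindex R (fun _ => L) σ).toLinearMap
          (reindex R (fun _ => N) σ).toLinearMap w) =
      reindex R (fun _ => L ⊗[R] N) σ (tensorPowerTensorEquiv R L N p w) := by
  suffices (tensorPowerTensorEquiv R L N p).toLinearMap ∘ₗ TensorProduct.map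
      (reindex R (fun _ => L) σ).toLinearMap (reindex R (fun _ => N) σ).toLinearMap =
      (reindex R (fun _ => L ⊗[R] N) σ).toLinearMap ∘ₗ
        (tensorPowerTensorEquiv R L N p).toLinearMap from
    LinearMap.congr_fun this w
  ext f n
  simp [reindex_tprod, tensorPowerTensorEquiv_tprod_tmul_tprod]

theorem tensorPowerTensorEquiv_lTensor_reindex
    (hΛ : (⋀[R]^2 L : Submodule R (ExteriorAlgebra R L)) = ⊥) (σ : Equiv.Perm (Fin p))
    (w : (⨂[R]^p L) ⊗[R] (⨂[R]^p N)) :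
    tensorPowerTensorEquiv R L N p ((reindex R (fun _ => N) σ).toLinearMap.lTensor _ w) =
      reindex R (fun _ => L ⊗[R] N) σ (tensorPowerTensorEquiv R L N p w) := by
  have hL : (reindex R (fun _ => L) σ).toLinearMap = LinearMap.id :=
    LinearMap.ext (reindex_perm_eq_self hΛ σ)
  rw [← tensorPowerTensorEquiv_map_reindex, hL]
  rfl

theorem tensorPowerTensorEquiv_symm_reindex
    (hΛ : (⋀[R]^2 L : Submodule R (ExteriorAlgebra R L)) = ⊥) (σ : Equiv.Perm (Fin p))
    (u : ⨂[R]^p (L ⊗[R] N)) :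
    (tensorPowerTensorEquiv R L N p).symm (reindex R (fun _ => L ⊗[R] N) σ u) =
      (reindex R (fun _ => N) σ).toLinearMap.lTensor _
        ((tensorPowerTensorEquiv R L N p).symm u) := by
  rw [LinearEquiv.symm_apply_eq, tensorPowerTensorEquiv_lTensor_reindex hΛ,
    LinearEquiv.apply_symm_apply]

end TensorPowerTensorLemmas

section Descent

variable {R : Type*} [CommRing R] {X A B Q₁ Q₂ : Type*} [AddCommGroup X] [Module R X]
  [AddCommGroup A] [Module R A] [AddCommGroup B] [Module R B] [AddCommGroup Q₁] [Module R Q₁]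
  [AddCommGroup Q₂] [Module R Q₂]

theorem LinearEquiv.exists_descent_of_surjective {q₁ : A →ₗ[R] Q₁} (hq₁ : Surjective q₁)
    {q₂ : B →ₗ[R] Q₂} (hq₂ : Surjective q₂) (D : X ⊗[R] A ≃ₗ[R] B)
    (h₁ : ∀ x a, q₁ a = 0 → q₂ (D (x ⊗ₜ a)) = 0)
    (h₂ : ∀ b, q₂ b = 0 → q₁.lTensor X (D.symm b) = 0) :
    ∃ e : X ⊗[R] Q₁ ≃ₗ[R] Q₂, ∀ x a, e (x ⊗ₜ q₁ a) = q₂ (D (x ⊗ₜ a)) := by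
  have hker : (LinearMap.ker (q₁.lTensor X)).map D.toLinearMap = LinearMap.ker q₂ := by
    refine le_antisymm ?_ fun b hb => ⟨D.symm b, h₂ b hb, D.apply_symm_apply b⟩
    rw [(lTensor_exact X q₁.exact_subtype_ker_map hq₁).linearMap_ker_eq,
      Submodule.map_le_iff_le_comap, LinearMap.range_le_iff_comap, ← top_le_iff,
      ← TensorProduct.span_tmul_eq_top, Submodule.span_le]
    rintro _ ⟨x, ⟨a, ha⟩, rfl⟩
    exact h₁ x a ha
  refine ⟨(LinearMap.quotKerEquivOfSurjective _ (LinearMap.lTensor_surjective X hq₁)).symm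
    ≪≫ₗ Submodule.Quotient.equiv _ _ D hker ≪≫ₗ LinearMap.quotKerEquivOfSurjective q₂ hq₂,
    fun x a => ?_⟩
  rw [LinearEquiv.trans_apply, LinearEquiv.trans_apply, ← LinearMap.lTensor_tmul,
    LinearMap.quotKerEquivOfSurjective_symm_apply]
  rfl

end Descent

section SymmetricPower

variable {R : Type*} [CommRing R] {M T : Type*} [AddCommGroup M] [Module R M]
  [AddCommGroup T] [Module R T] {p : ℕ}

theorem symRelations_le_ker {g : (⨂[R]^p M) →ₗ[R] T}
    (hg : ∀ σ t, g (reindex R (fun _ => M) σ t) = g t) :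
    symRelations R M p ≤ LinearMap.ker g := by
  rw [symRelations, Submodule.span_le]
  rintro _ ⟨σ, t, rfl⟩
  simp [hg]

theorem mkQ_symRelations_reindex (σ : Equiv.Perm (Fin p)) (t : ⨂[R]^p M) :
    (symRelations R M p).mkQ (reindex R (fun _ => M) σ t) = (symRelations R M p).mkQ t := by
  rw [Submodule.mkQ_apply, Submodule.mkQ_apply, Submodule.Quotient.eq, ← neg_sub]
  exact neg_mem (Submodule.subset_span ⟨σ, t, rfl⟩)

theorem exists_tensorPower_tensor_symmetricPower_equiv {L : Type*} [AddCommGroup L]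
    [Module R L] (hΛ : (⋀[R]^2 L : Submodule R (ExteriorAlgebra R L)) = ⊥)
    (N : Type*) [AddCommGroup N] [Module R N] (p : ℕ) :
    ∃ e : ((⨂[R]^p L) ⊗[R] ((⨂[R]^p N) ⧸ symRelations R N p)) ≃ₗ[R]
        ((⨂[R]^p (L ⊗[R] N)) ⧸ symRelations R (L ⊗[R] N) p),
      ∀ x t, e (x ⊗ₜ Submodule.Quotient.mk t) =
        Submodule.Quotient.mk (tensorPowerTensorEquiv R L N p (x ⊗ₜ t)) := by
  refine LinearEquiv.exists_descent_of_surjective (Submodule.mkQ_surjective _)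
    (Submodule.mkQ_surjective _) _ (fun x a ha => ?_) (fun b hb => ?_)
  · let g := (symRelations R (L ⊗[R] N) p).mkQ ∘ₗ
      (tensorPowerTensorEquiv R L N p).toLinearMap ∘ₗ TensorProduct.mk R _ _ x
    refine symRelations_le_ker (g := g) (fun σ t => ?_) ((Submodule.Quotient.mk_eq_zero _).1 ha)
    simp only [g, LinearMap.comp_apply, TensorProduct.mk_apply, LinearEquiv.coe_coe]
    rw [show x ⊗ₜ reindex R (fun _ => N) σ t =
        (reindex R (fun _ => N) σ).toLinearMap.lTensor _ (x ⊗ₜ t) from rfl,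
      tensorPowerTensorEquiv_lTensor_reindex hΛ, mkQ_symRelations_reindex]
  · let g := (symRelations R N p).mkQ.lTensor (⨂[R]^p L) ∘ₗ
      (tensorPowerTensorEquiv R L N p).symm.toLinearMap
    refine symRelations_le_ker (g := g) (fun σ u => ?_) ((Submodule.Quotient.mk_eq_zero _).1 hb)
    have hmkQ : (symRelations R N p).mkQ ∘ₗ (reindex R (fun _ => N) σ).toLinearMap =
        (symRelations R N p).mkQ := LinearMap.ext (mkQ_symRelations_reindex σ)
    simp only [g, LinearMap.comp_apply, LinearEquiv.coe_coe]
    rw [tensorPowerTensorEquiv_symm_reindex hΛ, ← LinearMap.comp_apply,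
      ← LinearMap.lTensor_comp, hmkQ]

end SymmetricPower

section Alternating

variable {R : Type*} [CommRing R] {M T : Type*} [AddCommGroup M] [Module R M]
  [AddCommGroup T] [Module R T] {κ : Type*} {g : κ → M}

theorem LinearMap.apply_self_eq_zero_of_span_eq_top (hg : Submodule.span R (Set.range g) = ⊤)
    {B : M →ₗ[R] M →ₗ[R] T} (hB : ∀ x y, B x y = -B y x) (h : ∀ a, B (g a) (g a) = 0)
    (x : M) : B x x = 0 := by
  have hx : x ∈ Submodule.span R (Set.range g) := hg ▸ Submodule.mem_top
  induction hx using Submodule.span_induction with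
  | mem _ hy => obtain ⟨a, rfl⟩ := hy; exact h a
  | zero => simp
  | add y z _ _ hy hz => simp [hy, hz, hB z y]
  | smul c y _ hy => simp [hy]

theorem MultilinearMap.map_eq_zero_of_eq_of_span_eq_top {ι : Type*} [Fintype ι]
    [DecidableEq ι] (hg : Submodule.span R (Set.range g) = ⊤)
    (f : MultilinearMap R (fun _ : ι => M) T) {i j : ι} (hij : i ≠ j)
    (hanti : ∀ v, f (v ∘ Equiv.swap i j) = -f v)
    (hdiag : ∀ c : ι → κ, c i = c j → f (g ∘ c) = 0) {v : ι → M} (hv : v i = v j) :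
    f v = 0 := by
  suffices ∀ K : Finset ι, ∀ v, v i = v j → (∀ k ∉ K, v k ∈ Set.range g) → f v = 0 from
    this Finset.univ v hv (by simp)
  intro K
  induction K using Finset.induction_on with
  | empty =>
    intro v hv hvg
    choose c hc using fun k => hvg k (Finset.notMem_empty k)
    have hvc : v = g ∘ update c j (c i) := by
      ext k
      rcases eq_or_ne k j with rfl | hk
      · simp [hc, hv]
      · simp [hk, hc]
    rw [hvc]
    exact hdiag _ (by simp [hij])
  | insert a K _ ih =>
    intro v hv hvg
    by_cases hai : a = i ∨ a = j
    -- slots `i` and `j` must move together: polarize the antisymmetric form in them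
    · have hB : ∀ x y, f.bilinAt v hij x y = -f.bilinAt v hij y x := fun x y => by
        rw [MultilinearMap.bilinAt_apply, MultilinearMap.bilinAt_apply, ← hanti,
          Equiv.comp_swap_eq_update]
        simp [update_comm hij.symm, hij]
      have hvv := LinearMap.apply_self_eq_zero_of_span_eq_top hg hB
        (fun b => ih _ (by simp [hij]) fun k hk => ?_) (v i)
      · rwa [MultilinearMap.bilinAt_apply, update_eq_self, hv, update_eq_self] at hvv
      · by_cases hkij : k = i ∨ k = j
        · rcases hkij with rfl | rfl <;> simp [hij]
        · obtain ⟨hki, hkj⟩ := not_or.1 hkij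
          rw [update_of_ne hkj, update_of_ne hki]
          exact hvg k (by rcases hai with rfl | rfl <;> simp [hk, hki, hkj])
    · obtain ⟨hai, haj⟩ := not_or.1 hai
      have hℓ : f.toLinearMap v a = 0 := LinearMap.ext_on_range hg fun b => by
        refine ih _ (by simp [Ne.symm hai, Ne.symm haj, hv]) fun k hk => ?_
        rcases eq_or_ne k a with rfl | hka
        · simp
        · simpa [hka] using hvg k (by simp [hk, hka])
      simpa using LinearMap.congr_fun hℓ (v a)

end Alternating

section ExteriorPower

variable {R : Type*} [CommRing R] {M T : Type*} [AddCommGroup M] [Module R M]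
  [AddCommGroup T] [Module R T] {p : ℕ}

theorem tensorPowerToExteriorPower_tprod (v : Fin p → M) :
    tensorPowerToExteriorPower R M p (PiTensorProduct.tprod R v) = exteriorPower.ιMulti R p v :=
  Subtype.ext <| by simp [tensorPowerToExteriorPower]

theorem tensorPowerToExteriorPower_surjective :
    Surjective (tensorPowerToExteriorPower R M p) := by
  rw [← LinearMap.range_eq_top, eq_top_iff, ← exteriorPower.ιMulti_span, Submodule.span_le]
  rintro _ ⟨v, rfl⟩
  exact ⟨PiTensorProduct.tprod R v, tensorPowerToExteriorPower_tprod v⟩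

theorem ker_tensorPowerToExteriorPower_le {g : (⨂[R]^p M) →ₗ[R] T}
    (hg : ∀ v i j, v i = v j → i ≠ j → g (PiTensorProduct.tprod R v) = 0) :
    LinearMap.ker (tensorPowerToExteriorPower R M p) ≤ LinearMap.ker g := by
  let G := exteriorPower.alternatingMapLinearEquiv
    (⟨g.compMultilinearMap (PiTensorProduct.tprod R), hg⟩ : M [⋀^Fin p]→ₗ[R] T)
  have hG : G ∘ₗ tensorPowerToExteriorPower R M p = g := by
    ext v
    rw [LinearMap.compMultilinearMap_apply, LinearMap.comp_apply,
      tensorPowerToExteriorPower_tprod, exteriorPower.alternatingMapLinearEquiv_apply_ιMulti]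
    rfl
  intro u hu
  rw [LinearMap.mem_ker, ← hG, LinearMap.comp_apply, hu, map_zero]

theorem tensorPowerToExteriorPower_comp_reindex_swap {i j : Fin p} (hij : i ≠ j) :
    tensorPowerToExteriorPower R M p ∘ₗ (reindex R (fun _ => M) (Equiv.swap i j)).toLinearMap =
      -tensorPowerToExteriorPower R M p := by
  ext v
  simp only [LinearMap.compMultilinearMap_apply, LinearMap.comp_apply, LinearEquiv.coe_coe,
    reindex_tprod, Equiv.symm_swap, LinearMap.neg_apply, tensorPowerToExteriorPower_tprod]
  exact congrArg Subtype.val ((exteriorPower.ιMulti R p).map_swap v hij)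

end ExteriorPower

section ExteriorPowerDescent

variable {R : Type*} [CommRing R] {L N : Type*} [AddCommGroup L] [Module R L]
  [AddCommGroup N] [Module R N] {p : ℕ}

theorem exteriorPower.ιMulti_tmul_eq_zero
    (hΛ : (⋀[R]^2 L : Submodule R (ExteriorAlgebra R L)) = ⊥) (f : Fin p → L) {n : Fin p → N}
    {i j : Fin p} (hn : n i = n j) (hij : i ≠ j) :
    exteriorPower.ιMulti R p (fun k => f k ⊗ₜ[R] n k) = 0 := by
  let B := ((exteriorPower.ιMulti R p).toMultilinearMap.bilinAt (fun k => f k ⊗ₜ n k)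
    hij).compl₁₂ ((TensorProduct.mk R L N).flip (n i)) ((TensorProduct.mk R L N).flip (n i))
  have hB : B = 0 := B.eq_zero_of_apply_self_of_exteriorPower_two_eq_bot hΛ fun a =>
    (exteriorPower.ιMulti R p).map_eq_zero_of_eq _ (by simp [hij]) hij
  have hupdate : update (update (fun k => f k ⊗ₜ[R] n k) i (f i ⊗ₜ n i)) j (f j ⊗ₜ n i) =
      fun k => f k ⊗ₜ[R] n k := by
    funext k
    rcases eq_or_ne k j with rfl | hkj
    · simp [hn]
    · rcases eq_or_ne k i with rfl | hki <;> simp [*]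
  simpa only [B, LinearMap.compl₁₂_apply, LinearMap.flip_apply, TensorProduct.mk_apply,
    MultilinearMap.bilinAt_apply, AlternatingMap.coe_multilinearMap, hupdate,
    LinearMap.zero_apply] using LinearMap.congr_fun₂ hB (f i) (f j)

theorem tensorPowerToExteriorPower_tensorPowerTensorEquiv_eq_zero
    (hΛ : (⋀[R]^2 L : Submodule R (ExteriorAlgebra R L)) = ⊥) (x : ⨂[R]^p L) {n : Fin p → N}
    {i j : Fin p} (hn : n i = n j) (hij : i ≠ j) :
    tensorPowerToExteriorPower R (L ⊗[R] N) p
      (tensorPowerTensorEquiv R L N p (x ⊗ₜ PiTensorProduct.tprod R n)) = 0 := by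
  induction x using PiTensorProduct.induction_on with
  | smul_tprod r f =>
    rw [← TensorProduct.smul_tmul', map_smul, map_smul, tensorPowerTensorEquiv_tprod_tmul_tprod,
      tensorPowerToExteriorPower_tprod, exteriorPower.ιMulti_tmul_eq_zero hΛ f hn hij, smul_zero]
  | add x y hx hy => rw [TensorProduct.add_tmul, map_add, map_add, hx, hy, add_zero]

theorem lTensor_tensorPowerToExteriorPower_tensorPowerTensorEquiv_symm_eq_zero
    (hΛ : (⋀[R]^2 L : Submodule R (ExteriorAlgebra R L)) = ⊥) {v : Fin p → L ⊗[R] N}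
    {i j : Fin p} (hv : v i = v j) (hij : i ≠ j) :
    (tensorPowerToExteriorPower R N p).lTensor _
      ((tensorPowerTensorEquiv R L N p).symm (PiTensorProduct.tprod R v)) = 0 := by
  have hg : Submodule.span R (Set.range fun c : L × N => c.1 ⊗ₜ[R] c.2) = ⊤ := by
    rw [← TensorProduct.span_tmul_eq_top]
    congr 1
    ext
    simp
  refine MultilinearMap.map_eq_zero_of_eq_of_span_eq_top hg
    (((tensorPowerToExteriorPower R N p).lTensor _ ∘ₗ
      (tensorPowerTensorEquiv R L N p).symm.toLinearMap).compMultilinearMap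
        (PiTensorProduct.tprod R)) hij (fun w => ?_) (fun c hc => ?_) hv
  · have hw : PiTensorProduct.tprod R (w ∘ Equiv.swap i j) =
        reindex R (fun _ => L ⊗[R] N) (Equiv.swap i j) (PiTensorProduct.tprod R w) := by
      rw [reindex_tprod, Equiv.symm_swap]
      rfl
    simp only [LinearMap.compMultilinearMap_apply, LinearMap.comp_apply, LinearEquiv.coe_coe, hw,
      tensorPowerTensorEquiv_symm_reindex hΛ]
    rw [← LinearMap.comp_apply, ← LinearMap.lTensor_comp,
      tensorPowerToExteriorPower_comp_reindex_swap hij, LinearMap.lTensor_neg, LinearMap.neg_apply]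
  · simp only [LinearMap.compMultilinearMap_apply, LinearMap.comp_apply, LinearEquiv.coe_coe,
      Function.comp_def, tensorPowerTensorEquiv_symm_tprod, LinearMap.lTensor_tmul,
      tensorPowerToExteriorPower_tprod]
    rw [(exteriorPower.ιMulti R p).map_eq_zero_of_eq _ (congrArg Prod.snd hc) hij,
      TensorProduct.tmul_zero]

theorem exists_tensorPower_tensor_exteriorPower_equiv
    (hΛ : (⋀[R]^2 L : Submodule R (ExteriorAlgebra R L)) = ⊥)
    (N : Type*) [AddCommGroup N] [Module R N] (p : ℕ) :
    ∃ e : ((⨂[R]^p L) ⊗[R] (⋀[R]^p N)) ≃ₗ[R] (⋀[R]^p (L ⊗[R] N)),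
      ∀ x t, e (x ⊗ₜ tensorPowerToExteriorPower R N p t) =
        tensorPowerToExteriorPower R (L ⊗[R] N) p (tensorPowerTensorEquiv R L N p (x ⊗ₜ t)) :=
  LinearEquiv.exists_descent_of_surjective tensorPowerToExteriorPower_surjective
    tensorPowerToExteriorPower_surjective _
    (fun x _ ha => ker_tensorPowerToExteriorPower_le
      (g := tensorPowerToExteriorPower R (L ⊗[R] N) p ∘ₗ
        (tensorPowerTensorEquiv R L N p).toLinearMap ∘ₗ TensorProduct.mk R _ _ x)
      (fun _ _ _ hn hij => tensorPowerToExteriorPower_tensorPowerTensorEquiv_eq_zero hΛ x hn hij)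
      ha)
    (fun _ hb => ker_tensorPowerToExteriorPower_le
      (g := (tensorPowerToExteriorPower R N p).lTensor (⨂[R]^p L) ∘ₗ
        (tensorPowerTensorEquiv R L N p).symm.toLinearMap)
      (fun _ _ _ hv hij =>
        lTensor_tensorPowerToExteriorPower_tensorPowerTensorEquiv_symm_eq_zero hΛ hv hij)
      hb)

end ExteriorPowerDescent

theorem tensorPower_flat_vanishing_exterior_square_general
    (R : Type*) [CommRing R] (L : Type*) [AddCommGroup L] [Module R L]
    (hΛ : (⋀[R]^2 L : Submodule R (ExteriorAlgebra R L)) = ⊥)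
    (p : ℕ) :
    (∀ (σ : Equiv.Perm (Fin p)) (x : ⨂[R]^p L),
      PiTensorProduct.reindex R (fun _ => L) σ x = x) ∧
    (∀ (N : Type*) [AddCommGroup N] [Module R N],
      ∃ e : ((⨂[R]^p L) ⊗[R] ((⨂[R]^p N) ⧸ symRelations R N p)) ≃ₗ[R]
          ((⨂[R]^p (L ⊗[R] N)) ⧸ symRelations R (L ⊗[R] N) p),
        ∀ (x : ⨂[R]^p L) (t : ⨂[R]^p N),
          e (x ⊗ₜ[R] Submodule.Quotient.mk t) =
            Submodule.Quotient.mk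
              (PiTensorProduct.map₂ (fun _ => TensorProduct.mk R L N) x t)) ∧
    (∀ (N : Type*) [AddCommGroup N] [Module R N],
      ∃ e : ((⨂[R]^p L) ⊗[R] (⋀[R]^p N)) ≃ₗ[R] (⋀[R]^p (L ⊗[R] N)),
        ∀ (x : ⨂[R]^p L) (t : ⨂[R]^p N),
          e (x ⊗ₜ[R] tensorPowerToExteriorPower R N p t) =
            tensorPowerToExteriorPower R (L ⊗[R] N) p
              (PiTensorProduct.map₂ (fun _ => TensorProduct.mk R L N) x t)) := by
  refine ⟨reindex_perm_eq_self hΛ, fun N _ _ => ?_, fun N _ _ => ?_⟩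
  · obtain ⟨e, he⟩ := exists_tensorPower_tensor_symmetricPower_equiv hΛ N p
    exact ⟨e, fun x t => by rw [he, map₂_mk_eq_tensorPowerTensorEquiv]⟩
  · obtain ⟨e, he⟩ := exists_tensorPower_tensor_exteriorPower_equiv hΛ N p
    exact ⟨e, fun x t => by rw [he, map₂_mk_eq_tensorPowerTensorEquiv]⟩

/-- Let `R` be a commutative ring and `L` a flat `R`-module with
`Λ² L = 0`.  Then for every `p > 0`:
(a) every permutation `σ ∈ S_p` acts as the identity on `L^{⊗p}`;
(b) for every `R`-module `N`, the reordering map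
`L^{⊗p} ⊗ N^{⊗p} → (L ⊗ N)^{⊗p}` followed by the projection onto `Sym^p(L ⊗ N)`
descends to an isomorphism `L^{⊗p} ⊗ Sym^p(N) ≅ Sym^p(L ⊗ N)`;
(c) likewise it descends to an isomorphism `L^{⊗p} ⊗ Λ^p(N) ≅ Λ^p(L ⊗ N)`. -/
theorem tensorPower_flat_vanishing_exterior_square
    (R : Type*) [CommRing R] (L : Type*) [AddCommGroup L] [Module R L]
    (hL : Module.Flat R L) (hΛ : (⋀[R]^2 L : Submodule R (ExteriorAlgebra R L)) = ⊥)
    (p : ℕ) (hp : 0 < p) :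
    (∀ (σ : Equiv.Perm (Fin p)) (x : ⨂[R]^p L),
      PiTensorProduct.reindex R (fun _ => L) σ x = x) ∧
    (∀ (N : Type*) [AddCommGroup N] [Module R N],
      ∃ e : ((⨂[R]^p L) ⊗[R] ((⨂[R]^p N) ⧸ symRelations R N p)) ≃ₗ[R]
          ((⨂[R]^p (L ⊗[R] N)) ⧸ symRelations R (L ⊗[R] N) p),
        ∀ (x : ⨂[R]^p L) (t : ⨂[R]^p N),
          e (x ⊗ₜ[R] Submodule.Quotient.mk t) =
            Submodule.Quotient.mk
              (PiTensorProduct.map₂ (fun _ => TensorProduct.mk R L N) x t)) ∧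
    (∀ (N : Type*) [AddCommGroup N] [Module R N],
      ∃ e : ((⨂[R]^p L) ⊗[R] (⋀[R]^p N)) ≃ₗ[R] (⋀[R]^p (L ⊗[R] N)),
        ∀ (x : ⨂[R]^p L) (t : ⨂[R]^p N),
          e (x ⊗ₜ[R] tensorPowerToExteriorPower R N p t) =
            tensorPowerToExteriorPower R (L ⊗[R] N) p
              (PiTensorProduct.map₂ (fun _ => TensorProduct.mk R L N) x t)) :=
  tensorPower_flat_vanishing_exterior_square_general R L hΛ p
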